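/- Let β ≥ 0. Suppose v : [0,1] → ℝ is continuous on [0,1] and differentiable on (0,1), and that the function (a,b) ↦ ln(a+b) + v(b/(a+b)) is strictly concave on the convex set {(a,b) ∈ [0,∞)² : a+b > 0}. Then there exists a (necessarily unique) point y̲ ∈ [0,1] such that the map y ↦ v(y) − ln(1+βy) is strictly increasing on [0,y̲] and strictly decreasing on [y̲,1]; in particular, y̲ is the unique maximizer of y ↦ v(y) − ln(1+βy) over [0,1]. Moreover, if 0 < y̲ < 1, then y̲ is the unique solution in (0,1) of the equation v'(x) = β/(1+βx). -/

import Mathlib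

open Set

noncomputable def bbTm (β y : ℝ) : ℝ := y * (1 + β) / (1 + β * y)
noncomputable def bbSm (β u : ℝ) : ℝ := u / (1 + β - β * u)
noncomputable def bbH (β : ℝ) (v : ℝ → ℝ) (u : ℝ) : ℝ :=
  Real.log ((1 - u) + u / (1 + β)) + v ((u / (1 + β)) / ((1 - u) + u / (1 + β)))

lemma bbA_pos {β : ℝ} (hβ : 0 ≤ β) {y : ℝ} (hy : 0 ≤ y) : 0 < 1 + β * y := by nlinarith

lemma bbD_pos {β : ℝ} (hβ : 0 ≤ β) {u : ℝ} (hu : u ≤ 1) : 0 < 1 + β - β * u := by nlinarith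

lemma bbTm_mem {β : ℝ} (hβ : 0 ≤ β) {y : ℝ} (hy : y ∈ Icc (0:ℝ) 1) :
    bbTm β y ∈ Icc (0:ℝ) 1 := by
  have hA : 0 < 1 + β * y := bbA_pos hβ hy.1
  unfold bbTm
  constructor
  · apply div_nonneg _ hA.le; nlinarith [hy.1]
  · rw [div_le_one hA]; nlinarith [hy.2]

lemma bbSm_mem {β : ℝ} (hβ : 0 ≤ β) {u : ℝ} (hu : u ∈ Icc (0:ℝ) 1) :
    bbSm β u ∈ Icc (0:ℝ) 1 := by
  have hD : 0 < 1 + β - β * u := bbD_pos hβ hu.2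
  unfold bbSm
  constructor
  · exact div_nonneg hu.1 hD.le
  · rw [div_le_one hD]; nlinarith [hu.2]

lemma bbSm_tm {β : ℝ} (hβ : 0 ≤ β) {y : ℝ} (hy : 0 ≤ y) : bbSm β (bbTm β y) = y := by
  have hA : 0 < 1 + β * y := bbA_pos hβ hy
  have hB : 0 < 1 + β := by linarith
  have hD2 : 1 + β - β * (y * (1 + β) / (1 + β * y)) = (1 + β) / (1 + β * y) := by
    field_simp; ring
  unfold bbSm bbTm
  rw [hD2, div_div_div_cancel_right₀ hA.ne', mul_div_cancel_right₀ _ hB.ne']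

lemma bbTm_sm {β : ℝ} (hβ : 0 ≤ β) {u : ℝ} (hu : u ∈ Icc (0:ℝ) 1) :
    bbTm β (bbSm β u) = u := by
  have hD : 0 < 1 + β - β * u := bbD_pos hβ hu.2
  have hB : 0 < 1 + β := by linarith
  have e3 : 1 + β * (u / (1 + β - β * u)) = (1 + β) / (1 + β - β * u) := by
    field_simp; ring
  unfold bbSm bbTm
  rw [e3]
  rw [div_mul_eq_mul_div, div_div_div_cancel_right₀ hD.ne', mul_div_cancel_right₀ _ hB.ne']

lemma bbTm_strictMono {β : ℝ} (hβ : 0 ≤ β) : StrictMonoOn (bbTm β) (Icc (0:ℝ) 1) := by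
  intro y1 h1 y2 h2 h12
  have hA1 : 0 < 1 + β * y1 := bbA_pos hβ h1.1
  have hA2 : 0 < 1 + β * y2 := bbA_pos hβ h2.1
  unfold bbTm
  rw [div_lt_div_iff₀ hA1 hA2]
  nlinarith [h1.1, mul_nonneg (mul_nonneg hβ h1.1) hβ]

lemma bbSm_mem_Ioo {β : ℝ} (hβ : 0 ≤ β) {u : ℝ} (hu : u ∈ Ioo (0:ℝ) 1) :
    bbSm β u ∈ Ioo (0:ℝ) 1 := by
  have hD : 0 < 1 + β - β * u := bbD_pos hβ hu.2.le
  unfold bbSm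
  constructor
  · exact div_pos hu.1 hD
  · rw [div_lt_one hD]; nlinarith [hu.2]

lemma bbTm_mem_Ioo {β : ℝ} (hβ : 0 ≤ β) {y : ℝ} (hy : y ∈ Ioo (0:ℝ) 1) :
    bbTm β y ∈ Ioo (0:ℝ) 1 := by
  have hA : 0 < 1 + β * y := bbA_pos hβ hy.1.le
  have hB : 0 < 1 + β := by linarith
  unfold bbTm
  constructor
  · exact div_pos (mul_pos hy.1 hB) hA
  · rw [div_lt_one hA]; nlinarith [hy.2]

/-- The key identity: `h(u) = g(s(u))` where `g y = v y - log (1+βy)`. -/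
lemma bbH_eq {β : ℝ} (hβ : 0 ≤ β) (v : ℝ → ℝ) {u : ℝ} (hu : u ∈ Icc (0:ℝ) 1) :
    bbH β v u = v (bbSm β u) - Real.log (1 + β * bbSm β u) := by
  have hB : 0 < 1 + β := by linarith
  have hD : 0 < 1 + β - β * u := bbD_pos hβ hu.2
  have e1 : (1 - u) + u / (1 + β) = (1 + β - β * u) / (1 + β) := by
    field_simp; ring
  have e2 : (u / (1 + β)) / ((1 + β - β * u) / (1 + β)) = bbSm β u := by
    unfold bbSm
    rw [div_div_div_cancel_right₀ hB.ne']
  have e3 : 1 + β * bbSm β u = (1 + β) / (1 + β - β * u) := by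
    unfold bbSm; field_simp; ring
  unfold bbH
  rw [e1, e2, e3, Real.log_div hD.ne' hB.ne', Real.log_div hB.ne' hD.ne']
  ring

lemma bbSm_hasDeriv {β : ℝ} (hβ : 0 ≤ β) {u : ℝ} (hu : u ≤ 1) :
    HasDerivAt (bbSm β) ((1 + β) / (1 + β - β * u) ^ 2) u := by
  have hD : 0 < 1 + β - β * u := bbD_pos hβ hu
  have h0 : HasDerivAt (fun t : ℝ => β * t) β u := by
    simpa using (hasDerivAt_id u).const_mul β
  have h1 : HasDerivAt (fun t : ℝ => 1 + β - β * t) (-β) u := h0.const_sub (1 + β)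
  have h2 := (hasDerivAt_id u).div h1 hD.ne'
  simp only [id_eq] at h2
  unfold bbSm
  exact h2.congr_deriv (by ring)

lemma bbH_strictConcave {β : ℝ} (hβ : 0 ≤ β) (v : ℝ → ℝ)
    (hconc : StrictConcaveOn ℝ {p : ℝ × ℝ | 0 ≤ p.1 ∧ 0 ≤ p.2 ∧ 0 < p.1 + p.2}
      (fun p : ℝ × ℝ => Real.log (p.1 + p.2) + v (p.2 / (p.1 + p.2)))) :
    StrictConcaveOn ℝ (Icc (0:ℝ) 1) (bbH β v) := by
  have hB : 0 < 1 + β := by linarith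
  have hmem : ∀ u ∈ Icc (0:ℝ) 1, ((1 - u, u / (1 + β)) : ℝ × ℝ) ∈
      {p : ℝ × ℝ | 0 ≤ p.1 ∧ 0 ≤ p.2 ∧ 0 < p.1 + p.2} := by
    intro u hu
    refine ⟨by show (0:ℝ) ≤ 1 - u; linarith [hu.2], div_nonneg hu.1 hB.le, ?_⟩
    have h : (1 - u) + u / (1 + β) = (1 + β - β * u) / (1 + β) := by field_simp; ring
    show 0 < (1 - u) + u / (1 + β)
    rw [h]; exact div_pos (bbD_pos hβ hu.2) hB
  constructor
  · exact convex_Icc 0 1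
  · intro u0 h0 u1 h1 hne a b ha hb hab
    have hpe : (a • ((1 - u0, u0 / (1 + β)) : ℝ × ℝ) + b • ((1 - u1, u1 / (1 + β)) : ℝ × ℝ))
        = ((1 - (a * u0 + b * u1), (a * u0 + b * u1) / (1 + β)) : ℝ × ℝ) := by
      rw [Prod.smul_mk, Prod.smul_mk, Prod.mk_add_mk, Prod.mk.injEq]
      constructor
      · rw [smul_eq_mul, smul_eq_mul]; nlinarith [hab]
      · rw [smul_eq_mul, smul_eq_mul]; field_simp
    have hne' : ((1 - u0, u0 / (1 + β)) : ℝ × ℝ) ≠ ((1 - u1, u1 / (1 + β)) : ℝ × ℝ) := by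
      intro h
      apply hne
      have h1' := congrArg Prod.fst h
      simp only [Prod.fst] at h1'
      linarith [h1']
    have hlt := hconc.2 (hmem u0 h0) (hmem u1 h1) hne' ha hb hab
    rw [hpe] at hlt
    simpa [bbH, smul_eq_mul] using hlt

/-- Lemma 4.1 (i): existence of the lower (buy) boundary of the no-trade region.
Under strict concavity of the value function in bond/stock holdings, the map
`y ↦ v(y) − ln(1+βy)` is strictly increasing then strictly decreasing, with a unique
maximizer `y̲`; if `y̲` is interior it is the unique solution of `v'(x) = β/(1+βx)`. -/
theorem buy_boundary_exists (β : ℝ) (hβ : 0 ≤ β) (v : ℝ → ℝ)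
    (hv : ContinuousOn v (Icc 0 1))
    (hv' : ∀ x ∈ Ioo (0:ℝ) 1, DifferentiableAt ℝ v x)
    (hconc : StrictConcaveOn ℝ {p : ℝ × ℝ | 0 ≤ p.1 ∧ 0 ≤ p.2 ∧ 0 < p.1 + p.2}
      (fun p : ℝ × ℝ => Real.log (p.1 + p.2) + v (p.2 / (p.1 + p.2)))) :
    ∃ yl ∈ Icc (0:ℝ) 1,
      StrictMonoOn (fun y => v y - Real.log (1 + β * y)) (Icc 0 yl) ∧
      StrictAntiOn (fun y => v y - Real.log (1 + β * y)) (Icc yl 1) ∧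
      (∀ y ∈ Icc (0:ℝ) 1, y ≠ yl →
        v y - Real.log (1 + β * y) < v yl - Real.log (1 + β * yl)) ∧
      (yl ∈ Ioo (0:ℝ) 1 →
        deriv v yl = β / (1 + β * yl) ∧
        ∀ x ∈ Ioo (0:ℝ) 1, deriv v x = β / (1 + β * x) → x = yl) := by
  have hB : 0 < 1 + β := by linarith
  set g : ℝ → ℝ := fun y => v y - Real.log (1 + β * y) with hg
  have hApos : ∀ y : ℝ, 0 ≤ y → 0 < 1 + β * y := fun y hy => bbA_pos hβ hy
  have hgc : ContinuousOn g (Icc 0 1) := by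
    apply hv.sub
    apply ContinuousOn.log
    · exact (continuous_const.add (continuous_const.mul continuous_id)).continuousOn
    · intro x hx; exact (hApos x hx.1).ne'
  have hkeyt : ∀ y ∈ Icc (0:ℝ) 1, bbH β v (bbTm β y) = g y := by
    intro y hy
    rw [bbH_eq hβ v (bbTm_mem hβ hy), bbSm_tm hβ hy.1]
  have hconch := bbH_strictConcave hβ v hconc
  -- strict quasiconcavity of g
  have qc : ∀ x ∈ Icc (0:ℝ) 1, ∀ z ∈ Icc (0:ℝ) 1, ∀ y : ℝ, x < y → y < z →
      min (g x) (g z) < g y := by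
    intro x hx z hz y hxy hyz
    have hy : y ∈ Icc (0:ℝ) 1 := ⟨le_trans hx.1 hxy.le, le_trans hyz.le hz.2⟩
    have htx : bbTm β x < bbTm β y := bbTm_strictMono hβ hx hy hxy
    have hty : bbTm β y < bbTm β z := bbTm_strictMono hβ hy hz hyz
    have hd : 0 < bbTm β z - bbTm β x := by linarith
    set a := (bbTm β z - bbTm β y) / (bbTm β z - bbTm β x) with hadef
    set b := (bbTm β y - bbTm β x) / (bbTm β z - bbTm β x) with hbdef
    have ha : 0 < a := div_pos (by linarith) hd
    have hb : 0 < b := div_pos (by linarith) hd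
    have hab : a + b = 1 := by rw [hadef, hbdef, ← add_div]; field_simp; ring
    have hcomb : a * bbTm β x + b * bbTm β z = bbTm β y := by
      rw [hadef, hbdef]; field_simp; ring
    have hlt := hconch.2 (bbTm_mem hβ hx) (bbTm_mem hβ hz) (ne_of_lt (htx.trans hty)) ha hb hab
    simp only [smul_eq_mul] at hlt
    rw [hcomb] at hlt
    rw [hkeyt x hx, hkeyt z hz, hkeyt y hy] at hlt
    have hmin1 := min_le_left (g x) (g z)
    have hmin2 := min_le_right (g x) (g z)
    have e : a * min (g x) (g z) + b * min (g x) (g z) = min (g x) (g z) := by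
      rw [← add_mul, hab, one_mul]
    nlinarith [mul_le_mul_of_nonneg_left hmin1 ha.le, mul_le_mul_of_nonneg_left hmin2 hb.le]
  obtain ⟨yl, hylI, hmax⟩ := isCompact_Icc.exists_isMaxOn (nonempty_Icc.mpr zero_le_one) hgc
  have hmax' : ∀ y ∈ Icc (0:ℝ) 1, g y ≤ g yl := fun y hy => hmax hy
  have hstrict : ∀ y ∈ Icc (0:ℝ) 1, y ≠ yl → g y < g yl := by
    intro y hy hne
    by_contra hcon
    push_neg at hcon
    have heq : g y = g yl := le_antisymm (hmax' y hy) hcon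
    rcases lt_or_gt_of_ne hne with h | h
    · have hmm : (y + yl) / 2 ∈ Icc (0:ℝ) 1 :=
        ⟨by linarith [hy.1, hylI.1], by linarith [hy.2, hylI.2]⟩
      have hm := qc y hy yl hylI ((y + yl) / 2) (by linarith) (by linarith)
      have := hmax' _ hmm
      rw [heq, min_self] at hm
      linarith
    · have hmm : (y + yl) / 2 ∈ Icc (0:ℝ) 1 :=
        ⟨by linarith [hy.1, hylI.1], by linarith [hy.2, hylI.2]⟩
      have hm := qc yl hylI y hy ((y + yl) / 2) (by linarith) (by linarith)
      have := hmax' _ hmm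
      rw [heq, min_self] at hm
      linarith
  have hsub1 : Icc (0:ℝ) yl ⊆ Icc (0:ℝ) 1 := Icc_subset_Icc le_rfl hylI.2
  have hsub2 : Icc yl (1:ℝ) ⊆ Icc (0:ℝ) 1 := Icc_subset_Icc hylI.1 le_rfl
  refine ⟨yl, hylI, ?_, ?_, hstrict, ?_⟩
  · intro p hp q hq hpq
    rcases eq_or_lt_of_le hq.2 with h | h
    · rw [h]
      exact hstrict p (hsub1 hp) (by rw [h] at hpq; exact ne_of_lt hpq)
    · have hm := qc p (hsub1 hp) yl hylI q hpq h
      by_contra hcon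
      push_neg at hcon
      have h2 : g q ≤ min (g p) (g yl) := le_min hcon (hmax' q (hsub1 hq))
      linarith
  · intro p hp q hq hpq
    rcases eq_or_lt_of_le hp.1 with h | h
    · rw [← h]
      refine hstrict q (hsub2 hq) ?_
      rw [← h] at hpq
      exact ne_of_gt hpq
    · have hm := qc yl hylI q (hsub2 hq) p h hpq
      by_contra hcon
      push_neg at hcon
      have h2 : g p ≤ min (g yl) (g q) := le_min (hmax' p (hsub2 hp)) hcon
      linarith
  · intro hylo
    have hlog : ∀ x : ℝ, 0 ≤ x →
        HasDerivAt (fun y => Real.log (1 + β * y)) (β / (1 + β * x)) x := by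
      intro x hx
      have h1 : HasDerivAt (fun y : ℝ => 1 + β * y) β x := by
        simpa using ((hasDerivAt_id x).const_mul β).const_add 1
      have h2 := (Real.hasDerivAt_log (hApos x hx).ne').comp x h1
      simpa [Function.comp_def, div_eq_inv_mul] using h2
    have hgd : ∀ x ∈ Ioo (0:ℝ) 1, HasDerivAt g (deriv v x - β / (1 + β * x)) x := by
      intro x hx
      exact ((hv' x hx).hasDerivAt).sub (hlog x hx.1.le)
    have hloc : IsLocalMax g yl := hmax.isLocalMax (Icc_mem_nhds hylo.1 hylo.2)
    have hd0 : deriv g yl = 0 := hloc.deriv_eq_zero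
    have hd1 : deriv g yl = deriv v yl - β / (1 + β * yl) := (hgd yl hylo).deriv
    have hveq : deriv v yl = β / (1 + β * yl) := by rw [hd1] at hd0; linarith
    refine ⟨hveq, ?_⟩
    intro x hx hdx
    have hzero : ∀ w ∈ Ioo (0:ℝ) 1, deriv v w = β / (1 + β * w) →
        deriv (bbH β v) (bbTm β w) = 0 := by
      intro w hw hdw
      have hgw : HasDerivAt g 0 w := by
        have := hgd w hw; rwa [hdw, sub_self] at this
      have htw : bbTm β w ∈ Ioo (0:ℝ) 1 := bbTm_mem_Ioo hβ hw
      have hsw : bbSm β (bbTm β w) = w := bbSm_tm hβ hw.1.le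
      have hs' : HasDerivAt (bbSm β) ((1 + β) / (1 + β - β * bbTm β w) ^ 2) (bbTm β w) :=
        bbSm_hasDeriv hβ htw.2.le
      have hgw' : HasDerivAt g 0 (bbSm β (bbTm β w)) := by rw [hsw]; exact hgw
      have hchain : HasDerivAt (fun t => g (bbSm β t))
          (0 * ((1 + β) / (1 + β - β * bbTm β w) ^ 2)) (bbTm β w) := by
        simpa [Function.comp_def] using hgw'.comp (bbTm β w) hs'
      have hev : bbH β v =ᶠ[nhds (bbTm β w)] (fun t => g (bbSm β t)) := by
        filter_upwards [Icc_mem_nhds htw.1 htw.2] with t ht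
        exact bbH_eq hβ v ht
      have hfin := hchain.congr_of_eventuallyEq hev
      simpa using hfin.deriv
    have hdiffh : ∀ u ∈ Ioo (0:ℝ) 1, DifferentiableAt ℝ (bbH β v) u := by
      intro u hu
      have hsu : bbSm β u ∈ Ioo (0:ℝ) 1 := bbSm_mem_Ioo hβ hu
      have hgsu : DifferentiableAt ℝ g (bbSm β u) := (hgd _ hsu).differentiableAt
      have hs' := (bbSm_hasDeriv hβ hu.2.le).differentiableAt
      have hcomp : DifferentiableAt ℝ (fun t => g (bbSm β t)) u := hgsu.comp u hs'
      apply hcomp.congr_of_eventuallyEq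
      filter_upwards [Icc_mem_nhds hu.1 hu.2] with t ht
      exact bbH_eq hβ v ht
    have hanti : StrictAntiOn (deriv (bbH β v)) (Ioo 0 1) :=
      (hconch.subset Ioo_subset_Icc_self (convex_Ioo 0 1)).strictAntiOn_deriv hdiffh
    have htx := bbTm_mem_Ioo hβ hx
    have htyl := bbTm_mem_Ioo hβ hylo
    have heq : bbTm β x = bbTm β yl :=
      hanti.injOn htx htyl (by rw [hzero x hx hdx, hzero yl hylo hveq])
    exact (bbTm_strictMono hβ).injOn (Ioo_subset_Icc_self hx) (Ioo_subset_Icc_self hylo) heq
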